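/- Let 𝒜 : ℝ^{n×m} → ℝ^q and 𝓛 : ℝ^{n×m} → ℝ^p be linear maps, b ∈ ℝ^q, σ ≥ 0, γ > 0, η > 0, and let k ≤ min(n,m). Suppose (L̄, R̄) with L̄ ∈ ℝ^{n×k}, R̄ ∈ ℝ^{m×k} satisfies ‖𝒜(L̄ R̄ᵀ) − b‖₂ ≤ σ, and let F̄ = (1/2)‖L̄‖_F² + (1/2)‖R̄‖_F² + (1/(2γ))‖𝓛(L̄ R̄ᵀ)‖₂². If (L*, R*, W*) is a global minimizer of the relaxed problem min_{L,R,W} (1/2)‖L‖_F² + (1/2)‖R‖_F² + (1/(2γ))‖𝓛(W)‖₂² + (1/(2η))‖W − L Rᵀ‖_F² subject to ‖𝒜(W) − b‖₂ ≤ σ, then ‖W* − L* (R*)ᵀ‖_F ≤ √(2 η F̄). -/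

import Mathlib

open Matrix

/-- Frobenius norm of a real matrix. -/
noncomputable def frobNorm {n m : ℕ} (X : Matrix (Fin n) (Fin m) ℝ) : ℝ :=
  Real.sqrt (∑ i, ∑ j, (X i j) ^ 2)

/-- Nuclear norm of a real matrix: the sum of its singular values, i.e. the square
roots of the eigenvalues of the positive semidefinite matrix `Xᵀ X` (over `ℝ`,
`Xᴴ = Xᵀ`). -/
noncomputable def nucNorm {n m : ℕ} (X : Matrix (Fin n) (Fin m) ℝ) : ℝ :=
  ∑ j, Real.sqrt (((show (Xᵀ * X).IsHermitian by
    simpa [Matrix.conjTranspose_eq_transpose_of_trivial] using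
      Matrix.isHermitian_conjTranspose_mul_self X)).eigenvalues j)

/-- Euclidean (l²) norm on `ℝ^q`. -/
noncomputable def l2 {q : ℕ} (v : Fin q → ℝ) : ℝ :=
  Real.sqrt (∑ i, (v i) ^ 2)

/-- Objective of the relaxed smooth/low-rank Morozov formulation:
`(1/2)‖L‖_F² + (1/2)‖R‖_F² + (1/(2γ))‖𝓛(W)‖₂² + (1/(2η))‖W − L Rᵀ‖_F²`. -/
noncomputable def relaxObj {n m k p : ℕ}
    (Lop : Matrix (Fin n) (Fin m) ℝ →ₗ[ℝ] (Fin p → ℝ)) (γ η : ℝ)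
    (L : Matrix (Fin n) (Fin k) ℝ) (R : Matrix (Fin m) (Fin k) ℝ)
    (W : Matrix (Fin n) (Fin m) ℝ) : ℝ :=
  (1 / 2) * frobNorm L ^ 2 + (1 / 2) * frobNorm R ^ 2 + (1 / (2 * γ)) * l2 (Lop W) ^ 2 +
    (1 / (2 * η)) * frobNorm (W - L * Rᵀ) ^ 2

/-!
The triple `(L̄, R̄, L̄ R̄ᵀ)` is feasible for the relaxed problem, its penalty term vanishes, and
its objective value is `F̄`. Minimality of `(L*, R*, W*)` and nonnegativity of the remaining terms
then give `(1/(2η)) ‖W* − L* R*ᵀ‖_F² ≤ F̄`.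
-/

@[simp]
theorem frobNorm_zero {n m : ℕ} : frobNorm (0 : Matrix (Fin n) (Fin m) ℝ) = 0 := by
  simp [frobNorm]

section relaxObj

variable {n m k p : ℕ} (Lop : Matrix (Fin n) (Fin m) ℝ →ₗ[ℝ] (Fin p → ℝ)) (γ η : ℝ)
  (L : Matrix (Fin n) (Fin k) ℝ) (R : Matrix (Fin m) (Fin k) ℝ)

theorem relaxObj_mul_transpose :
    relaxObj Lop γ η L R (L * Rᵀ) =
      (1 / 2) * frobNorm L ^ 2 + (1 / 2) * frobNorm R ^ 2 +
        (1 / (2 * γ)) * l2 (Lop (L * Rᵀ)) ^ 2 := by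
  simp [relaxObj]

theorem gap_le_relaxObj (hγ : 0 ≤ γ) (W : Matrix (Fin n) (Fin m) ℝ) :
    (1 / (2 * η)) * frobNorm (W - L * Rᵀ) ^ 2 ≤ relaxObj Lop γ η L R W := by
  unfold relaxObj
  have : 0 ≤ (1 / 2) * frobNorm L ^ 2 + (1 / 2) * frobNorm R ^ 2 +
      (1 / (2 * γ)) * l2 (Lop W) ^ 2 := by positivity
  linarith

end relaxObj

theorem frobNorm_le_sqrt_of_gap_le {n m : ℕ} {X : Matrix (Fin n) (Fin m) ℝ} {η c : ℝ}
    (hη : 0 < η) (h : (1 / (2 * η)) * frobNorm X ^ 2 ≤ c) :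
    frobNorm X ≤ Real.sqrt (2 * η * c) := by
  rw [one_div_mul_eq_div, div_le_iff₀ (by positivity)] at h
  exact Real.le_sqrt_of_sq_le (by linarith)

theorem relaxation_gap_bound_general (n m q p k : ℕ)
    (A : Matrix (Fin n) (Fin m) ℝ →ₗ[ℝ] (Fin q → ℝ))
    (Lop : Matrix (Fin n) (Fin m) ℝ →ₗ[ℝ] (Fin p → ℝ))
    (b : Fin q → ℝ) (σ γ η : ℝ) (hγ : 0 < γ) (hη : 0 < η)
    (Lbar : Matrix (Fin n) (Fin k) ℝ) (Rbar : Matrix (Fin m) (Fin k) ℝ)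
    (hfeas : l2 (A (Lbar * Rbarᵀ) - b) ≤ σ)
    (Fbar : ℝ)
    (hFbar : Fbar = (1 / 2) * frobNorm Lbar ^ 2 + (1 / 2) * frobNorm Rbar ^ 2 +
      (1 / (2 * γ)) * l2 (Lop (Lbar * Rbarᵀ)) ^ 2)
    (Ls : Matrix (Fin n) (Fin k) ℝ) (Rs : Matrix (Fin m) (Fin k) ℝ)
    (Ws : Matrix (Fin n) (Fin m) ℝ)
    (hmin : ∀ (L' : Matrix (Fin n) (Fin k) ℝ) (R' : Matrix (Fin m) (Fin k) ℝ)
        (W' : Matrix (Fin n) (Fin m) ℝ), l2 (A W' - b) ≤ σ →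
        relaxObj Lop γ η Ls Rs Ws ≤ relaxObj Lop γ η L' R' W') :
    frobNorm (Ws - Ls * Rsᵀ) ≤ Real.sqrt (2 * η * Fbar) := by
  have hopt := hmin Lbar Rbar (Lbar * Rbarᵀ) hfeas
  rw [relaxObj_mul_transpose, ← hFbar] at hopt
  exact frobNorm_le_sqrt_of_gap_le hη ((gap_le_relaxObj Lop γ η Ls Rs hγ.le Ws).trans hopt)

/-- If `(L̄, R̄)` is feasible for the factorized Morozov problem with objective value
`F̄`, then any global minimizer `(L*, R*, W*)` of the relaxed problem satisfies
`‖W* − L* (R*)ᵀ‖_F ≤ √(2 η F̄)`; in particular `‖W − L Rᵀ‖ = O(√η)` as `η → 0`. -/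
theorem relaxation_gap_bound (n m q p k : ℕ) (hk : k ≤ min n m)
    (A : Matrix (Fin n) (Fin m) ℝ →ₗ[ℝ] (Fin q → ℝ))
    (Lop : Matrix (Fin n) (Fin m) ℝ →ₗ[ℝ] (Fin p → ℝ))
    (b : Fin q → ℝ) (σ γ η : ℝ) (hσ : 0 ≤ σ) (hγ : 0 < γ) (hη : 0 < η)
    (Lbar : Matrix (Fin n) (Fin k) ℝ) (Rbar : Matrix (Fin m) (Fin k) ℝ)
    (hfeas : l2 (A (Lbar * Rbarᵀ) - b) ≤ σ)
    (Fbar : ℝ)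
    (hFbar : Fbar = (1 / 2) * frobNorm Lbar ^ 2 + (1 / 2) * frobNorm Rbar ^ 2 +
      (1 / (2 * γ)) * l2 (Lop (Lbar * Rbarᵀ)) ^ 2)
    (Ls : Matrix (Fin n) (Fin k) ℝ) (Rs : Matrix (Fin m) (Fin k) ℝ)
    (Ws : Matrix (Fin n) (Fin m) ℝ)
    (hWs : l2 (A Ws - b) ≤ σ)
    (hmin : ∀ (L' : Matrix (Fin n) (Fin k) ℝ) (R' : Matrix (Fin m) (Fin k) ℝ)
        (W' : Matrix (Fin n) (Fin m) ℝ), l2 (A W' - b) ≤ σ →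
        relaxObj Lop γ η Ls Rs Ws ≤ relaxObj Lop γ η L' R' W') :
    frobNorm (Ws - Ls * Rsᵀ) ≤ Real.sqrt (2 * η * Fbar) :=
  relaxation_gap_bound_general n m q p k A Lop b σ γ η hγ hη Lbar Rbar hfeas Fbar hFbar Ls Rs Ws
    hmin
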